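/- arXiv:2211.03166 — 6 statements merged into one kernel-verified Lean document; each statement's English description precedes it below -/
import Mathlib

section
/- Let p be a prime with p ≡ 1 (mod 8) and let α be a positive integer. Then the number of cliques of order 3 (triangles) in the Peisert-like graph G*(p^α) equals p^{3α−2}(p−1)(p−5)/48. -/
/-!
Let χ be the discrete logarithm to base g reduced mod 4, a surjection of (ℤ/qℤ)ˣ onto ℤ/4ℤ, and
let C_i = χ⁻¹(i). The connection set of G*(q) is C_0 ∪ C_1, and χ(-1) = 0 because 8 ∣ φ(q).
Translating and then scaling by units, the ordered triangles number
q · |C_0| · Σ_{c,i,j ∈ {0,1}} (i - c, j - c), where (i, j) = #{x ∈ C_i | x - 1 ∈ C_j} are the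
cyclotomic numbers of order 4. They satisfy (i, j) = (j, i) = (-i, j - i), and each row sum
Σ_j (i, j) equals |C_i| = φ(q)/4, except that row 0 misses the p^(α-1) units x ≡ 1 (mod p):
these form a group of odd order, so they all lie in C_0. These relations alone force
Σ_{c,i,j} (i - c, j - c) = 2|C_0| - 2p^(α-1) = p^(α-1)(p - 5)/2.
-/

open Finset

def peisertSet (n : ℕ) (g : (ZMod n)ˣ) : Set (ZMod n) :=
  {z | ∃ k : ℤ, z = ((g ^ (4 * k) : (ZMod n)ˣ) : ZMod n) ∨ z = ((g * g ^ (4 * k) : (ZMod n)ˣ) : ZMod n)}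

def peisertGraph (n : ℕ) (g : (ZMod n)ˣ) : SimpleGraph (ZMod n) :=
  SimpleGraph.fromRel (fun x y => x - y ∈ peisertSet n g)

noncomputable instance (n : ℕ) (g : (ZMod n)ˣ) : DecidableRel (peisertGraph n g).Adj :=
  Classical.decRel _

open Function

section DiscreteLog

variable {G : Type*} [Group G] {g : G} {m : ℕ}

noncomputable def dlogMod (hg : ∀ u : G, u ∈ Subgroup.zpowers g) (hm : m ∣ orderOf g) :
    G →* Multiplicative (ZMod m) :=
  (zpowersHom G g).liftOfSurjective
    (fun u => by obtain ⟨k, hk⟩ := hg u; exact ⟨.ofAdd k, hk⟩)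
    ⟨(Int.castAddHom (ZMod m)).toMultiplicative, fun k hk => by
      have hdvd : (m : ℤ) ∣ k.toAdd :=
        (Int.natCast_dvd_natCast.2 hm).trans (orderOf_dvd_iff_zpow_eq_one.2 hk)
      simpa [MonoidHom.mem_ker, ← ofAdd_zero] using
        (ZMod.intCast_zmod_eq_zero_iff_dvd _ m).2 hdvd⟩

variable (hg : ∀ u : G, u ∈ Subgroup.zpowers g) (hm : m ∣ orderOf g)

theorem dlogMod_zpow (k : ℤ) : dlogMod hg hm (g ^ k) = .ofAdd (k : ZMod m) :=
  (zpowersHom G g).liftOfRightInverse_comp_apply _ _ _ (.ofAdd k)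

theorem dlogMod_surjective : Surjective (dlogMod hg hm) := fun i =>
  ⟨g ^ (i.toAdd.cast : ℤ), by
    rw [dlogMod_zpow, ZMod.intCast_cast, ZMod.cast_id', id, ofAdd_toAdd]⟩

theorem dlogMod_eq_one_of_sq_eq_one (h2m : 2 * m ∣ orderOf g) {u : G} (hu : u ^ 2 = 1) :
    dlogMod hg hm u = 1 := by
  obtain ⟨k, rfl⟩ := Subgroup.mem_zpowers_iff.1 (hg u)
  have h2k : (2 * m : ℤ) ∣ 2 * k := by
    refine (Int.natCast_dvd_natCast.2 h2m).trans (orderOf_dvd_iff_zpow_eq_one.2 ?_)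
    rwa [mul_comm, zpow_mul, zpow_ofNat]
  rw [dlogMod_zpow, (ZMod.intCast_zmod_eq_zero_iff_dvd k m).2
    (Int.dvd_of_mul_dvd_mul_left two_ne_zero h2k), ofAdd_zero]

end DiscreteLog

theorem Finset.card_filter_mem_biUnion {α ι β : Type*} [DecidableEq β] (s : Finset α)
    (I : Finset ι) {F : ι → Finset β} (hF : Pairwise (Disjoint on F)) (φ : α → β) :
    #{x ∈ s | φ x ∈ I.biUnion F} = ∑ j ∈ I, #{x ∈ s | φ x ∈ F j} := by
  classical
  rw [← card_biUnion (t := fun j => {x ∈ s | φ x ∈ F j}) fun i _ j _ hij =>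
    disjoint_left.2 fun x hi hj =>
      disjoint_left.1 (hF hij) (mem_filter.1 hi).2 (mem_filter.1 hj).2]
  congr 1
  ext x
  simp only [mem_filter, mem_biUnion]
  exact ⟨fun ⟨hx, j, hj, hφ⟩ => ⟨j, hj, hx, hφ⟩,
    fun ⟨j, hj, hx, hφ⟩ => ⟨hx, j, hj, hφ⟩⟩

theorem Finset.card_filter_biUnion_mem_biUnion {α ι : Type*} [DecidableEq α] (I : Finset ι)
    {F : ι → Finset α} (hF : Pairwise (Disjoint on F)) (φ : α → α) :
    #{x ∈ I.biUnion F | φ x ∈ I.biUnion F} =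
      ∑ i ∈ I, ∑ j ∈ I, #{x ∈ F i | φ x ∈ F j} := by
  rw [filter_biUnion, card_biUnion fun i _ j _ hij =>
    disjoint_filter_filter (hF hij)]
  exact sum_congr rfl fun i _ => card_filter_mem_biUnion _ I hF φ

section CyclotomicClasses

variable {R : Type*} [CommRing R] [Fintype R] [DecidableEq R] {m : ℕ}
  (χ : Rˣ →* Multiplicative (ZMod m))

def cyclotomicClass (i : ZMod m) : Finset R :=
  (univ.filter fun u : Rˣ => χ u = .ofAdd i).map ⟨Units.val, Units.val_injective⟩

def cyclotomicNumber (i j : ZMod m) : ℕ :=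
  #{x ∈ cyclotomicClass χ i | x - 1 ∈ cyclotomicClass χ j}

variable {χ}

theorem mem_cyclotomicClass {i : ZMod m} {x : R} :
    x ∈ cyclotomicClass χ i ↔ ∃ u : Rˣ, χ u = .ofAdd i ∧ (u : R) = x := by
  simp [cyclotomicClass]

theorem coe_mem_cyclotomicClass {i : ZMod m} {u : Rˣ} :
    (u : R) ∈ cyclotomicClass χ i ↔ χ u = .ofAdd i := by
  simp [mem_cyclotomicClass, Units.val_inj]

theorem isUnit_of_mem_cyclotomicClass {i : ZMod m} {x : R} (hx : x ∈ cyclotomicClass χ i) :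
    IsUnit x := by
  obtain ⟨u, -, rfl⟩ := mem_cyclotomicClass.1 hx
  exact u.isUnit

theorem pairwise_disjoint_cyclotomicClass : Pairwise (Disjoint on cyclotomicClass χ) := by
  intro i j hij
  refine Finset.disjoint_left.2 fun x hi hj => hij ?_
  obtain ⟨u, hu, rfl⟩ := mem_cyclotomicClass.1 hi
  rw [coe_mem_cyclotomicClass, hu] at hj
  exact Multiplicative.ofAdd.injective hj

theorem units_mul_mem_cyclotomicClass (w : Rˣ) {i : ZMod m} {x : R}
    (hx : x ∈ cyclotomicClass χ i) : (w : R) * x ∈ cyclotomicClass χ ((χ w).toAdd + i) := by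
  obtain ⟨u, hu, rfl⟩ := mem_cyclotomicClass.1 hx
  rw [← Units.val_mul, coe_mem_cyclotomicClass, map_mul, hu]
  rfl

theorem neg_mem_cyclotomicClass (hneg : χ (-1) = 1) {i : ZMod m} {x : R}
    (hx : x ∈ cyclotomicClass χ i) : -x ∈ cyclotomicClass χ i := by
  simpa [hneg] using units_mul_mem_cyclotomicClass (-1) hx

theorem card_cyclotomicClass (hχ : Surjective χ) (i : ZMod m) :
    #(cyclotomicClass χ i) = #(cyclotomicClass χ 0) := by
  obtain ⟨w, hw⟩ := hχ (.ofAdd i)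
  refine card_nbij' (fun x => ((w⁻¹ : Rˣ) : R) * x) (fun x => (w : R) * x) (fun x hx => ?_)
    (fun x hx => ?_) (fun x _ => by simp) (fun x _ => by simp)
  · simpa [hw] using units_mul_mem_cyclotomicClass w⁻¹ hx
  · simpa [hw] using units_mul_mem_cyclotomicClass w hx

theorem card_units_eq_mul_card_cyclotomicClass [NeZero m] (hχ : Surjective χ) :
    Fintype.card Rˣ = m * #(cyclotomicClass χ 0) := by
  rw [← card_univ, card_eq_sum_card_fiberwise (f := χ) (t := univ) fun _ _ => mem_univ _]
  have hfiber (y : Multiplicative (ZMod m)) :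
      #{u : Rˣ | χ u = y} = #(cyclotomicClass χ 0) := by
    rw [← card_cyclotomicClass hχ y.toAdd, cyclotomicClass, card_map, ofAdd_toAdd]
  simp [hfiber, Fintype.card_multiplicative]

theorem cyclotomicNumber_comm (hneg : χ (-1) = 1) (i j : ZMod m) :
    cyclotomicNumber χ i j = cyclotomicNumber χ j i := by
  have hmaps (i j : ZMod m) (x : R)
      (hx : x ∈ cyclotomicClass χ i ∧ x - 1 ∈ cyclotomicClass χ j) :
      1 - x ∈ cyclotomicClass χ j ∧ 1 - x - 1 ∈ cyclotomicClass χ i := by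
    constructor
    · simpa using neg_mem_cyclotomicClass hneg hx.2
    · simpa using neg_mem_cyclotomicClass hneg hx.1
  unfold cyclotomicNumber
  refine card_nbij' (1 - ·) (1 - ·) (fun x hx => ?_) (fun x hx => ?_)
    (fun x _ => sub_sub_cancel 1 x) (fun x _ => sub_sub_cancel 1 x)
  · simpa using hmaps i j x (by simpa using hx)
  · simpa using hmaps j i x (by simpa using hx)

theorem cyclotomicNumber_neg_sub (hneg : χ (-1) = 1) (i j : ZMod m) :
    cyclotomicNumber χ i j = cyclotomicNumber χ (-i) (j - i) := by
  have hmaps (i j : ZMod m) (x : R)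
      (hx : x ∈ cyclotomicClass χ i ∧ x - 1 ∈ cyclotomicClass χ j) :
      Ring.inverse x ∈ cyclotomicClass χ (-i) ∧
        Ring.inverse x - 1 ∈ cyclotomicClass χ (j - i) := by
    obtain ⟨u, hu, rfl⟩ := mem_cyclotomicClass.1 hx.1
    have hsub : ((u⁻¹ : Rˣ) : R) - 1 = ((u⁻¹ : Rˣ) : R) * -((u : R) - 1) := by
      rw [mul_neg, mul_sub, Units.inv_mul, mul_one, neg_sub]
    rw [Ring.inverse_unit, coe_mem_cyclotomicClass, map_inv, hu, hsub]
    refine ⟨rfl, ?_⟩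
    simpa [hu, neg_add_eq_sub] using
      units_mul_mem_cyclotomicClass u⁻¹ (neg_mem_cyclotomicClass hneg hx.2)
  unfold cyclotomicNumber
  refine card_nbij' Ring.inverse Ring.inverse (fun x hx => ?_) (fun x hx => ?_)
    (fun x hx => Ring.inverse_inverse (isUnit_of_mem_cyclotomicClass (mem_filter.1 hx).1))
    (fun x hx => Ring.inverse_inverse (isUnit_of_mem_cyclotomicClass (mem_filter.1 hx).1))
  · simpa using hmaps i j x (by simpa using hx)
  · simpa using hmaps (-i) (j - i) x (by simpa using hx)

theorem card_filter_sub_units_mem_cyclotomicClass (w : Rˣ) (i j : ZMod m) :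
    #{x ∈ cyclotomicClass χ i | x - (w : R) ∈ cyclotomicClass χ j} =
      cyclotomicNumber χ (i - (χ w).toAdd) (j - (χ w).toAdd) := by
  unfold cyclotomicNumber
  refine card_nbij' (((w⁻¹ : Rˣ) : R) * ·) ((w : R) * ·) (fun x hx => ?_) (fun x hx => ?_)
    (fun x _ => by simp) (fun x _ => by simp)
  · simp only [mem_coe, mem_filter] at hx ⊢
    have h1 : ((w⁻¹ : Rˣ) : R) * x - 1 = ((w⁻¹ : Rˣ) : R) * (x - w) := by
      rw [mul_sub, Units.inv_mul]
    rw [h1]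
    constructor
    · simpa [neg_add_eq_sub] using units_mul_mem_cyclotomicClass w⁻¹ hx.1
    · simpa [neg_add_eq_sub] using units_mul_mem_cyclotomicClass w⁻¹ hx.2
  · simp only [mem_coe, mem_filter] at hx ⊢
    rw [← mul_sub_one]
    constructor
    · simpa using units_mul_mem_cyclotomicClass w hx.1
    · simpa using units_mul_mem_cyclotomicClass w hx.2

theorem sum_card_filter_sub_mem_biUnion_cyclotomicClass (hχ : Surjective χ)
    (I : Finset (ZMod m)) :
    ∑ b ∈ I.biUnion (cyclotomicClass χ),
        #{a ∈ I.biUnion (cyclotomicClass χ) | a - b ∈ I.biUnion (cyclotomicClass χ)} =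
      #(cyclotomicClass χ 0) *
        ∑ c ∈ I, ∑ i ∈ I, ∑ j ∈ I, cyclotomicNumber χ (i - c) (j - c) := by
  rw [sum_biUnion fun i _ j _ hij => pairwise_disjoint_cyclotomicClass hij, mul_sum]
  refine sum_congr rfl fun c _ => ?_
  rw [← card_cyclotomicClass hχ c, ← smul_eq_mul, ← sum_const]
  refine sum_congr rfl fun b hb => ?_
  obtain ⟨w, hw, rfl⟩ := mem_cyclotomicClass.1 hb
  rw [card_filter_biUnion_mem_biUnion I pairwise_disjoint_cyclotomicClass]
  simp [card_filter_sub_units_mem_cyclotomicClass, hw]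

theorem sum_cyclotomicNumber_add_card_filter_not_isUnit [NeZero m] (i : ZMod m) :
    ∑ j, cyclotomicNumber χ i j + #{x ∈ cyclotomicClass χ i | ¬IsUnit (x - 1)} =
      #(cyclotomicClass χ i) := by
  have hunits (y : R) : IsUnit y ↔ y ∈ univ.biUnion (cyclotomicClass χ) := by
    simp only [mem_biUnion, mem_univ, true_and, mem_cyclotomicClass]
    exact ⟨fun ⟨u, hu⟩ => ⟨(χ u).toAdd, u, rfl, hu⟩,
      fun ⟨_, u, _, hu⟩ => ⟨u, hu⟩⟩
  simp_rw [hunits]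
  unfold cyclotomicNumber
  rw [← card_filter_mem_biUnion _ _ pairwise_disjoint_cyclotomicClass,
    card_filter_add_card_filter_not]

end CyclotomicClasses

theorem sum_pair_sub_sub_add_two_mul_eq (n : ZMod 4 → ZMod 4 → ℕ) (f s : ℕ)
    (hcomm : ∀ i j, n i j = n j i) (hneg_sub : ∀ i j, n i j = n (-i) (j - i))
    (hrow : ∀ i, ∑ j, n i j + (if i = 0 then s else 0) = f) :
    ∑ c ∈ {0, 1}, ∑ i ∈ {0, 1}, ∑ j ∈ {0, 1}, n (i - c) (j - c) + 2 * s = 2 * f := by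
  have hsum : ∑ c ∈ {0, 1}, ∑ i ∈ {0, 1}, ∑ j ∈ {0, 1}, n (i - c) (j - c) =
      n 0 0 + n 0 1 + (n 1 0 + n 1 1) + (n 3 3 + n 3 0 + (n 0 3 + n 0 0)) := by
    simp only [Finset.sum_pair (show (0 : ZMod 4) ≠ 1 by decide)]
    rfl
  have hexp (F : ZMod 4 → ℕ) : ∑ j, F j = F 0 + F 1 + F 2 + F 3 := Fin.sum_univ_four F
  have h0 := hrow 0
  have h1 := hrow 1
  have h2 := hrow 2
  rw [hexp, if_pos rfl] at h0
  rw [hexp, if_neg (by decide)] at h1 h2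
  have : n 1 0 = n 3 3 := hneg_sub 1 0
  have : n 3 0 = n 1 1 := hneg_sub 3 0
  have : n 2 0 = n 2 2 := hneg_sub 2 0
  have : n 1 2 = n 3 1 := hneg_sub 1 2
  have : n 2 1 = n 2 3 := hneg_sub 2 1
  have := hcomm 0 1
  have := hcomm 0 2
  have := hcomm 0 3
  have := hcomm 1 2
  have := hcomm 1 3
  have := hcomm 2 3
  omega

theorem Finset.card_filter_pairwise_ne_triple {α : Type*} [DecidableEq α] (s : Finset α) :
    #{t ∈ s ×ˢ s ×ˢ s | t.1 ≠ t.2.1 ∧ t.1 ≠ t.2.2 ∧ t.2.1 ≠ t.2.2} =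
      #s * (#s - 1) * (#s - 2) := by
  set D := {t ∈ s ×ˢ s ×ˢ s | t.1 ≠ t.2.1 ∧ t.1 ≠ t.2.2 ∧ t.2.1 ≠ t.2.2} with hD
  rw [card_eq_sum_card_fiberwise (f := Prod.fst) (t := s) fun t ht =>
    (mem_product.1 (mem_filter.1 ht).1).1]
  have hfiber : ∀ x ∈ s, #{t ∈ D | t.1 = x} = #(s.erase x).offDiag := by
    intro x hx
    refine card_nbij' Prod.snd (fun yz => (x, yz)) (fun t ht => ?_) (fun yz hyz => ?_)
      (fun t ht => ?_) (fun _ _ => rfl)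
    · simp only [hD, coe_filter, Set.mem_ofPred_eq] at ht
      simp only [coe_offDiag, Set.mem_offDiag, mem_coe, mem_erase]
      grind
    · simp only [coe_offDiag, Set.mem_offDiag, mem_coe, mem_erase] at hyz
      simp only [hD, coe_filter, Set.mem_ofPred_eq]
      grind
    · simp only [coe_filter, Set.mem_ofPred_eq] at ht
      exact Prod.ext ht.2.symm rfl
  rw [sum_congr rfl fun x hx => by rw [hfiber x hx, offDiag_card, card_erase_of_mem hx],
    sum_const, smul_eq_mul, mul_assoc, show #s - 2 = #s - 1 - 1 by omega,
    Nat.mul_sub_one (#s - 1) (#s - 1)]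

theorem SimpleGraph.card_adj_triples {V : Type*} [Fintype V] [DecidableEq V] (G : SimpleGraph V)
    [DecidableRel G.Adj] :
    #{t : V × V × V | G.Adj t.1 t.2.1 ∧ G.Adj t.1 t.2.2 ∧ G.Adj t.2.1 t.2.2} =
      6 * #(G.cliqueFinset 3) := by
  have hmaps : ∀ t ∈ ({t : V × V × V | G.Adj t.1 t.2.1 ∧ G.Adj t.1 t.2.2 ∧
      G.Adj t.2.1 t.2.2} : Finset _), ({t.1, t.2.1, t.2.2} : Finset V) ∈ G.cliqueFinset 3 :=
    fun t ht => by
    rw [SimpleGraph.mem_cliqueFinset_iff, SimpleGraph.is3Clique_triple_iff]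
    exact (mem_filter.1 ht).2
  rw [card_eq_sum_card_fiberwise hmaps, mul_comm, ← smul_eq_mul, ← sum_const]
  refine sum_congr rfl fun s hs => ?_
  rw [SimpleGraph.mem_cliqueFinset_iff] at hs
  have hfiber : {t ∈ ({t : V × V × V | G.Adj t.1 t.2.1 ∧ G.Adj t.1 t.2.2 ∧
      G.Adj t.2.1 t.2.2} : Finset _) | {t.1, t.2.1, t.2.2} = s} =
      {t ∈ s ×ˢ s ×ˢ s | t.1 ≠ t.2.1 ∧ t.1 ≠ t.2.2 ∧ t.2.1 ≠ t.2.2} := by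
    ext ⟨x, y, z⟩
    simp only [mem_filter, mem_univ, true_and, mem_product]
    constructor
    · rintro ⟨⟨hxy, hxz, hyz⟩, rfl⟩
      simp [hxy.ne, hxz.ne, hyz.ne]
    · rintro ⟨⟨hx, hy, hz⟩, hxy, hxz, hyz⟩
      refine ⟨⟨hs.1 hx hy hxy, hs.1 hx hz hxz, hs.1 hy hz hyz⟩,
        eq_of_subset_of_card_le ?_ ?_⟩
      · simp [insert_subset_iff, hx, hy, hz]
      · rw [hs.2, card_eq_three.2 ⟨x, y, z, hxy, hxz, hyz, rfl⟩]
  rw [hfiber, card_filter_pairwise_ne_triple, hs.2]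

theorem SimpleGraph.card_adj_triples_of_adj_iff_sub_mem {A : Type*} [AddCommGroup A] [Fintype A]
    [DecidableEq A] (G : SimpleGraph A) [DecidableRel G.Adj] (S : Finset A)
    (hS : ∀ x y, G.Adj x y ↔ x - y ∈ S) :
    #{t : A × A × A | G.Adj t.1 t.2.1 ∧ G.Adj t.1 t.2.2 ∧ G.Adj t.2.1 t.2.2} =
      Fintype.card A * ∑ b ∈ S, #{a ∈ S | a - b ∈ S} := by
  have htranslate : #{t : A × A × A | G.Adj t.1 t.2.1 ∧ G.Adj t.1 t.2.2 ∧ G.Adj t.2.1 t.2.2} =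
      #((univ : Finset A) ×ˢ {ab ∈ S ×ˢ S | ab.1 - ab.2 ∈ S}) := by
    refine card_nbij' (fun t => (t.1, t.2.1 - t.1, t.2.2 - t.1))
      (fun t => (t.1, t.2.1 + t.1, t.2.2 + t.1)) (fun t ht => ?_) (fun t ht => ?_)
      (fun t _ => by simp) (fun t _ => by simp)
    · simp only [coe_filter, coe_product, Set.mem_ofPred_eq, Set.mem_prod, mem_univ, true_and,
        mem_coe, mem_product] at ht ⊢
      rw [G.adj_comm t.1, G.adj_comm t.1, hS, hS, hS] at ht
      simpa [and_assoc] using ht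
    · simp only [coe_filter, coe_product, Set.mem_ofPred_eq, Set.mem_prod, mem_univ, true_and,
        mem_coe, mem_product] at ht ⊢
      rw [G.adj_comm t.1, G.adj_comm t.1, hS, hS, hS]
      simpa [and_assoc] using ht
  rw [htranslate, card_product, card_univ, card_filter, sum_product_right]
  simp_rw [← card_filter]

theorem MonoidHom.map_eq_one_of_coprime {G H : Type*} [Group G] [Group H] [Finite H] (f : G →* H)
    {x : G} (hx : (orderOf x).Coprime (Nat.card H)) : f x = 1 :=
  orderOf_eq_one_iff.1 ((hx.coprime_dvd_left (orderOf_map_dvd f x)).eq_one_of_dvd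
    (orderOf_dvd_natCard _))

section PrimePower

variable {p k : ℕ} [Fact p.Prime]

theorem ZMod.isUnit_iff_castHom_ne_zero (hk : 0 < k) (x : ZMod (p ^ k)) :
    IsUnit x ↔ ZMod.castHom (dvd_pow_self p hk.ne') (ZMod p) x ≠ 0 := by
  rw [← ZMod.natCast_zmod_val x, ZMod.isUnit_natCast_iff_not_dvd_pow Fact.out hk, map_natCast,
    Ne, ZMod.natCast_eq_zero_iff]

theorem ZMod.mem_ker_unitsMap_iff (hk : 0 < k) (u : (ZMod (p ^ k))ˣ) :
    u ∈ (ZMod.unitsMap (dvd_pow_self p hk.ne')).ker ↔ ¬IsUnit ((u : ZMod (p ^ k)) - 1) := by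
  rw [ZMod.isUnit_iff_castHom_ne_zero hk, not_not, map_sub, map_one, sub_eq_zero,
    MonoidHom.mem_ker, Units.ext_iff, ZMod.unitsMap_val, Units.val_one, ZMod.castHom_apply]

theorem ZMod.card_ker_unitsMap (hk : 0 < k) :
    Nat.card (ZMod.unitsMap (dvd_pow_self p hk.ne')).ker = p ^ (k - 1) := by
  have hp : p.Prime := Fact.out
  have h := (ZMod.unitsMap (dvd_pow_self p hk.ne')).ker.card_mul_index
  rw [Subgroup.index_ker, MonoidHom.range_eq_top.2 (ZMod.unitsMap_surjective _),
    Subgroup.card_top, Nat.card_eq_fintype_card (α := (ZMod p)ˣ),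
    Nat.card_eq_fintype_card (α := (ZMod (p ^ k))ˣ), ZMod.card_units_eq_totient,
    ZMod.card_units_eq_totient, Nat.totient_prime_pow hp hk, Nat.totient_prime hp] at h
  exact Nat.eq_of_mul_eq_mul_right (Nat.sub_pos_of_lt hp.one_lt) h

theorem card_filter_not_isUnit_sub_one_cyclotomicClass (hk : 0 < k) {m : ℕ} [NeZero m]
    (hpm : p.Coprime m) (χ : (ZMod (p ^ k))ˣ →* Multiplicative (ZMod m)) (i : ZMod m) :
    #{x ∈ cyclotomicClass χ i | ¬IsUnit (x - 1)} = if i = 0 then p ^ (k - 1) else 0 := by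
  set K := (ZMod.unitsMap (dvd_pow_self p hk.ne')).ker
  have hK (u : (ZMod (p ^ k))ˣ) (hu : u ∈ K) : χ u = 1 := by
    refine χ.map_eq_one_of_coprime
      (Nat.Coprime.coprime_dvd_left (Subgroup.orderOf_dvd_natCard K hu) ?_)
    rw [ZMod.card_ker_unitsMap hk, Nat.card_eq_fintype_card, Fintype.card_multiplicative,
      ZMod.card]
    exact hpm.pow_left _
  rw [cyclotomicClass, filter_map, card_map, filter_filter]
  simp_rw [comp_apply, Embedding.coeFn_mk, ← ZMod.mem_ker_unitsMap_iff hk]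
  split_ifs with hi
  · rw [hi, ← ZMod.card_ker_unitsMap hk, Nat.card_eq_fintype_card, Fintype.card_subtype]
    exact congrArg card (filter_congr fun u _ => ⟨And.right, fun hu => ⟨hK u hu, hu⟩⟩)
  · refine card_eq_zero.2 (filter_false_of_mem fun u _ ⟨hu, huK⟩ => hi ?_)
    rw [hK u huK] at hu
    exact (Multiplicative.ofAdd.injective hu).symm

theorem sum_pair_cyclotomicNumber_add_two_mul_eq (hk : 0 < k) (hp4 : p.Coprime 4)
    (χ : (ZMod (p ^ k))ˣ →* Multiplicative (ZMod 4)) (hχ : Surjective χ)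
    (hneg : χ (-1) = 1) :
    ∑ c ∈ {0, 1}, ∑ i ∈ {0, 1}, ∑ j ∈ {0, 1}, cyclotomicNumber χ (i - c) (j - c) +
      2 * p ^ (k - 1) = 2 * #(cyclotomicClass χ 0) :=
  sum_pair_sub_sub_add_two_mul_eq _ _ _ (cyclotomicNumber_comm hneg)
    (cyclotomicNumber_neg_sub hneg) fun i => by
      rw [← card_filter_not_isUnit_sub_one_cyclotomicClass hk hp4 χ i,
        sum_cyclotomicNumber_add_card_filter_not_isUnit, card_cyclotomicClass hχ]

end PrimePower

section Peisert

variable {n : ℕ} [NeZero n] {g : (ZMod n)ˣ} (hg : ∀ u : (ZMod n)ˣ, u ∈ Subgroup.zpowers g)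
  (h4 : 4 ∣ orderOf g)

theorem mem_peisertSet_iff (z : ZMod n) :
    z ∈ peisertSet n g ↔
      z ∈ ({0, 1} : Finset (ZMod 4)).biUnion (cyclotomicClass (dlogMod hg h4)) := by
  simp only [peisertSet, Set.mem_ofPred_eq, mem_biUnion, mem_insert, mem_singleton,
    mem_cyclotomicClass]
  constructor
  · rintro ⟨k, rfl | rfl⟩
    · refine ⟨0, Or.inl rfl, _, ?_, rfl⟩
      rw [dlogMod_zpow, (ZMod.intCast_zmod_eq_zero_iff_dvd _ 4).2 (dvd_mul_right 4 k)]
    · refine ⟨1, Or.inr rfl, _, ?_, rfl⟩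
      rw [← zpow_one_add, dlogMod_zpow]
      push_cast
      rw [show (4 : ZMod 4) = 0 from rfl, zero_mul, add_zero]
  · rintro ⟨i, hi, u, hu, rfl⟩
    obtain ⟨k, rfl⟩ := Subgroup.mem_zpowers_iff.1 (hg u)
    rw [dlogMod_zpow] at hu
    replace hu : (k : ZMod 4) = i := Multiplicative.ofAdd.injective hu
    rcases hi with rfl | rfl
    · obtain ⟨j, rfl⟩ := (ZMod.intCast_zmod_eq_zero_iff_dvd k 4).1 hu
      exact ⟨j, Or.inl rfl⟩
    · obtain ⟨j, hj⟩ :=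
        (ZMod.intCast_eq_intCast_iff_dvd_sub 1 k 4).1 (by rw [hu, Int.cast_one])
      refine ⟨j, Or.inr ?_⟩
      rw [← zpow_one_add, show 1 + 4 * j = k by push_cast at hj; omega]

theorem peisertGraph_adj_iff (hn : 1 < n) (h8 : 2 * 4 ∣ orderOf g) (x y : ZMod n) :
    (peisertGraph n g).Adj x y ↔
      x - y ∈ ({0, 1} : Finset (ZMod 4)).biUnion (cyclotomicClass (dlogMod hg h4)) := by
  have : Fact (1 < n) := ⟨hn⟩
  have hneg : dlogMod hg h4 (-1) = 1 := dlogMod_eq_one_of_sq_eq_one hg h4 h8 neg_one_sq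
  have hneg_mem (z : ZMod n) :
      -z ∈ ({0, 1} : Finset (ZMod 4)).biUnion (cyclotomicClass (dlogMod hg h4)) ↔
        z ∈ ({0, 1} : Finset (ZMod 4)).biUnion (cyclotomicClass (dlogMod hg h4)) := by
    simp only [mem_biUnion]
    exact ⟨fun ⟨i, hi, h⟩ => ⟨i, hi, by simpa using neg_mem_cyclotomicClass hneg h⟩,
      fun ⟨i, hi, h⟩ => ⟨i, hi, neg_mem_cyclotomicClass hneg h⟩⟩
  rw [peisertGraph, SimpleGraph.fromRel_adj, mem_peisertSet_iff hg h4, mem_peisertSet_iff hg h4,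
    ← neg_sub, hneg_mem, or_self]
  refine ⟨And.right, fun h => ⟨fun hxy => ?_, h⟩⟩
  rw [hxy, sub_self] at h
  obtain ⟨i, -, hi⟩ := mem_biUnion.1 h
  exact not_isUnit_zero (isUnit_of_mem_cyclotomicClass hi)

theorem six_mul_card_cliqueFinset_three_peisertGraph (hn : 1 < n) (h8 : 2 * 4 ∣ orderOf g) :
    6 * #((peisertGraph n g).cliqueFinset 3) =
      n * (#(cyclotomicClass (dlogMod hg h4) 0) *
        ∑ c ∈ {0, 1}, ∑ i ∈ {0, 1}, ∑ j ∈ {0, 1},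
          cyclotomicNumber (dlogMod hg h4) (i - c) (j - c)) := by
  rw [← SimpleGraph.card_adj_triples, SimpleGraph.card_adj_triples_of_adj_iff_sub_mem _ _
    (peisertGraph_adj_iff hg h4 hn h8), ZMod.card,
    sum_card_filter_sub_mem_biUnion_cyclotomicClass (dlogMod_surjective hg h4)]

end Peisert

theorem stmt0 (p α : ℕ) (hp : p.Prime) (hp8 : p % 8 = 1) (hα : 1 ≤ α)
    (q : ℕ) (hq : q = p ^ α) [NeZero q]
    (g : (ZMod q)ˣ) (hg : ∀ u : (ZMod q)ˣ, u ∈ Subgroup.zpowers g) :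
    48 * ((peisertGraph q g).cliqueFinset 3).card = p ^ (3 * α - 2) * (p - 1) * (p - 5) := by
  have : Fact p.Prime := ⟨hp⟩
  have hp9 : 9 ≤ p := by have := hp.two_le; omega
  subst hq
  have hcard : Fintype.card (ZMod (p ^ α))ˣ = p ^ (α - 1) * (p - 1) := by
    rw [ZMod.card_units_eq_totient, Nat.totient_prime_pow hp hα]
  have h8 : 2 * 4 ∣ orderOf g := by
    rw [orderOf_eq_card_of_forall_mem_zpowers hg, Nat.card_eq_fintype_card, hcard]
    exact Dvd.dvd.mul_left (by omega) _
  have h4 : 4 ∣ orderOf g := (Nat.dvd_mul_left 4 2).trans h8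
  have hf := card_units_eq_mul_card_cyclotomicClass (dlogMod_surjective hg h4)
  have hT := sum_pair_cyclotomicNumber_add_two_mul_eq hα
    ((Nat.coprime_two_right.2 (Nat.odd_iff.2 (by omega))).pow_right 2) _
    (dlogMod_surjective hg h4) (dlogMod_eq_one_of_sq_eq_one hg h4 h8 neg_one_sq)
  have htri := six_mul_card_cliqueFinset_three_peisertGraph hg h4
    (Nat.one_lt_pow (by omega) (by omega)) h8
  set f := #(cyclotomicClass (dlogMod hg h4) 0)
  set T := ∑ c ∈ {0, 1}, ∑ i ∈ {0, 1}, ∑ j ∈ {0, 1},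
    cyclotomicNumber (dlogMod hg h4) (i - c) (j - c)
  have h2T : 2 * T = p ^ (α - 1) * (p - 5) := by
    rw [show p - 5 = (p - 1) - 4 by omega, Nat.mul_sub, ← hcard, hf]
    omega
  calc 48 * #((peisertGraph (p ^ α) g).cliqueFinset 3)
      = p ^ α * (4 * f) * (2 * T) := by rw [show 48 = 8 * 6 by rfl, mul_assoc, htri]; ring
    _ = p ^ (3 * α - 2) * (p - 1) * (p - 5) := by
      rw [← hf, hcard, h2T, show 3 * α - 2 = α + (α - 1) + (α - 1) by omega, pow_add, pow_add]
      ring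
end

section
/- Let q = p^α, where p is an odd prime and α ≥ 1 is an integer, and let A be a complex-valued Dirichlet character mod q. Then for every x ∈ ℤ/qℤ: A(1 + x) = Σ_{t=0}^{p^{α−1}−1} A(1 + t·p)·δ_{t·p}(x) + (1/φ(q))·Σ_χ J(A, χ̄)·χ(−x), where the second sum runs over all Dirichlet characters χ mod q, δ_s(x) = 1 if x = s and 0 otherwise, and φ is Euler's totient. -/
/-!
Unfolding the Jacobi sums and applying orthogonality of characters,
`(1/φ(q)) Σ_χ J(A, χ̄) χ(-x) = Σ_y A(y) [1 - y = -x is a unit]`, which is `A(1 + x)` when `x`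
is a unit and `0` otherwise. The non-units of `ℤ/p^αℤ` are exactly the `t·p` with
`t < p^(α-1)`, each hit once, so the first sum supplies `A(1 + x)` in the complementary case.
-/

open Finset

/-- The complex-conjugate Dirichlet character. -/
noncomputable def conjChar {q : ℕ} (A : DirichletCharacter ℂ q) : DirichletCharacter ℂ q :=
  A.ringHomComp (starRingEnd ℂ)

lemma conjChar_eq_inv {q : ℕ} (A : DirichletCharacter ℂ q) : conjChar A = A⁻¹ :=
  MulChar.star_eq_inv A

namespace DirichletCharacter

lemma sum_inv_apply_mul_apply (R : Type*) [CommRing R] [IsDomain R] {n : ℕ} [NeZero n]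
    [HasEnoughRootsOfUnity R (Monoid.exponent (ZMod n)ˣ)] (a b : ZMod n) :
    ∑ χ : DirichletCharacter R n, χ⁻¹ a * χ b =
      if IsUnit a ∧ a = b then (n.totient : R) else 0 := by
  by_cases ha : IsUnit a
  · obtain ⟨u, rfl⟩ := ha
    simp only [MulChar.inv_apply, Ring.inverse_unit, ← map_mul, sum_characters_eq,
      Units.inv_mul_eq_one, Units.isUnit, true_and]
  · simp [MulChar.map_nonunit _ ha, ha]

lemma inv_totient_mul_sum_jacobiSum_inv_mul {q : ℕ} [NeZero q] (A : DirichletCharacter ℂ q)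
    (x : ZMod q) :
    (1 / (q.totient : ℂ)) * ∑ χ : DirichletCharacter ℂ q, jacobiSum A χ⁻¹ * χ (-x) =
      if IsUnit x then A (1 + x) else 0 := by
  have hφ : (q.totient : ℂ) ≠ 0 := by exact_mod_cast (Nat.totient_pos.mpr (NeZero.pos q)).ne'
  have hsupport (y : ZMod q) : IsUnit (1 - y) ∧ 1 - y = -x ↔ IsUnit x ∧ y = 1 + x := by
    constructor
    · rintro ⟨hu, h⟩
      exact ⟨by simpa [h] using hu.neg, by linear_combination -h⟩
    · rintro ⟨hu, rfl⟩
      exact ⟨by simpa using hu.neg, by ring⟩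
  simp only [jacobiSum, sum_mul, mul_assoc]
  rw [sum_comm]
  simp only [← mul_sum, sum_inv_apply_mul_apply, hsupport]
  split_ifs with hx
  · simp only [hx, true_and, mul_ite, mul_zero, sum_ite_eq', mem_univ, if_true]
    field_simp
  · simp [hx]

end DirichletCharacter

namespace ZMod

lemma isUnit_iff_not_dvd_val {p α : ℕ} (hp : p.Prime) (hα : α ≠ 0) (x : ZMod (p ^ α)) :
    IsUnit x ↔ ¬ p ∣ x.val := by
  have : NeZero (p ^ α) := ⟨pow_ne_zero α hp.ne_zero⟩
  conv_lhs => rw [← natCast_zmod_val x]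
  rw [isUnit_iff_coprime, Nat.coprime_pow_right_iff (Nat.pos_of_ne_zero hα), Nat.coprime_comm,
    hp.coprime_iff_not_dvd]

lemma val_natCast_mul_natCast {q k p : ℕ} [NeZero q] (hq : q = k * p) {t : ℕ} (ht : t < k) :
    ((t : ZMod q) * p).val = t * p := by
  have hp : 0 < p := Nat.pos_of_mul_pos_left (hq ▸ NeZero.pos q)
  rw [← Nat.cast_mul, val_cast_of_lt (hq ▸ Nat.mul_lt_mul_of_pos_right ht hp)]

lemma injOn_natCast_mul {q k p : ℕ} [NeZero q] (hq : q = k * p) :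
    Set.InjOn (fun t : ℕ ↦ (t : ZMod q) * p) (range k) := fun t ht s hs h ↦ by
  have hp : 0 < p := Nat.pos_of_mul_pos_left (hq ▸ NeZero.pos q)
  have hval := congrArg val h
  simp only [val_natCast_mul_natCast hq (mem_range.mp ht),
    val_natCast_mul_natCast hq (mem_range.mp hs)] at hval
  exact Nat.eq_of_mul_eq_mul_right hp hval

lemma image_range_natCast_mul {q k p : ℕ} [NeZero q] (hq : q = k * p) :
    (range k).image (fun t : ℕ ↦ (t : ZMod q) * p) = ({x | p ∣ x.val} : Finset (ZMod q)) := by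
  ext x
  simp only [mem_image, mem_range, mem_filter, mem_univ, true_and]
  constructor
  · rintro ⟨t, ht, rfl⟩
    exact ⟨t, by rw [val_natCast_mul_natCast hq ht, mul_comm]⟩
  · rintro ⟨m, hm⟩
    refine ⟨m, ?_, ?_⟩
    · have hlt := x.val_lt
      rw [hm, hq, mul_comm] at hlt
      exact Nat.lt_of_mul_lt_mul_right hlt
    · rw [← Nat.cast_mul, mul_comm, ← hm, natCast_zmod_val]

lemma sum_range_mul_ite_natCast_mul_eq {R : Type*} [NonAssocSemiring R] {q k p : ℕ} [NeZero q]
    (hq : q = k * p) (g : ZMod q → R) (x : ZMod q) :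
    ∑ t ∈ range k, g (t * p) * (if x = t * p then 1 else 0) = if p ∣ x.val then g x else 0 := by
  rw [← sum_image (f := fun y ↦ g y * if x = y then 1 else 0) (injOn_natCast_mul hq),
    image_range_natCast_mul hq]
  simp [mul_ite, sum_ite_eq]

end ZMod

theorem char_one_add_expansion_general (p α : ℕ) (hp : p.Prime) (hα : 1 ≤ α)
    (q : ℕ) (hq : q = p ^ α) [NeZero q] (A : DirichletCharacter ℂ q) :
    ∀ x : ZMod q,
      A (1 + x) =
        (∑ t ∈ Finset.range (p ^ (α - 1)),
            A (1 + (t : ZMod q) * (p : ZMod q)) *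
              (if x = (t : ZMod q) * (p : ZMod q) then 1 else 0)) +
          (1 / (Nat.totient q : ℂ)) *
            ∑ᶠ χ : DirichletCharacter ℂ q, jacobiSum A (conjChar χ) * χ (-x) := by
  intro x
  subst hq
  have hpow : p ^ α = p ^ (α - 1) * p := by rw [← pow_succ, Nat.sub_add_cancel hα]
  rw [ZMod.sum_range_mul_ite_natCast_mul_eq hpow (fun y ↦ A (1 + y)), finsum_eq_sum_of_fintype]
  simp only [conjChar_eq_inv, DirichletCharacter.inv_totient_mul_sum_jacobiSum_inv_mul,
    ZMod.isUnit_iff_not_dvd_val hp (Nat.one_le_iff_ne_zero.mp hα)]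
  split_ifs <;> simp

theorem char_one_add_expansion (p α : ℕ) (hp : p.Prime) (hodd : Odd p) (hα : 1 ≤ α)
    (q : ℕ) (hq : q = p ^ α) [NeZero q] (A : DirichletCharacter ℂ q) :
    ∀ x : ZMod q,
      A (1 + x) =
        (∑ t ∈ Finset.range (p ^ (α - 1)),
            A (1 + (t : ZMod q) * (p : ZMod q)) *
              (if x = (t : ZMod q) * (p : ZMod q) then 1 else 0)) +
          (1 / (Nat.totient q : ℂ)) *
            ∑ᶠ χ : DirichletCharacter ℂ q, jacobiSum A (conjChar χ) * χ (-x) :=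
  char_one_add_expansion_general p α hp hα q hq A
end

section
/- Let q = p^α, where p is an odd prime and α ≥ 1 is an integer, and let A, B, C be complex-valued Dirichlet characters mod q. Then for every x ∈ ℤ/qℤ: (ε(x)·B(−1)·C(−1)/q)·Σ_{y ∈ ℤ/qℤ} B(y)·(B̄C)(1−y)·Ā(1−xy) = (q/φ(q))·Σ_χ binom(Aχ, χ)·binom(Bχ, Cχ)·χ(x), where the right-hand sum runs over all Dirichlet characters χ mod q, ε is the trivial character mod q (ε(x)=1 if x is a unit, 0 otherwise), and φ is Euler's totient. (The left side is the hypergeometric function ₂F₁(A,B;C|x) for Dirichlet characters.) -/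
open Finset

/-- The binomial coefficient `binom(A,B) = B(-1)/q * J(A, B̄)` for Dirichlet characters. -/
noncomputable def dBinom {q : ℕ} [NeZero q] (A B : DirichletCharacter ℂ q) : ℂ :=
  B (-1) / q * jacobiSum A (conjChar B)

/-- The hypergeometric function `₃F₂` for Dirichlet characters. -/
noncomputable def threeF₂ {q : ℕ} [NeZero q] (A B C D E : DirichletCharacter ℂ q)
    (x : ZMod q) : ℂ :=
  (q / (Nat.totient q : ℂ)) *
    ∑ᶠ χ : DirichletCharacter ℂ q,
      dBinom (A * χ) χ * dBinom (B * χ) (D * χ) * dBinom (C * χ) (E * χ) * χ x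

open scoped Ring

/-!
Expanding both binomial coefficients as Jacobi sums writes the right-hand side as a double sum
over `s, t` weighted by `∑ χ, χ (s t x) χ̄ ((1 - s)(1 - t))`, and orthogonality of characters
cuts it down to the pairs with `s t x = (1 - s)(1 - t)` a unit. For a unit `x` these pairs are
parametrised by `y = -t / (1 - t)`, with `s = 1 / (1 - x y)`, and the substitution turns
`A(s) B(t) C̄(1 - t)` into `B(-1) B(y) (B̄C)(1 - y) Ā(1 - x y)`, the summand of the left-hand side.
For `x` not a unit both sides vanish.
-/

lemma Ring.mul_inverse_eq_one_iff {M₀ : Type*} [CommMonoidWithZero M₀] {a b : M₀} :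
    a * b⁻¹ʳ = 1 ↔ a = b ∧ IsUnit b := by
  by_cases hb : IsUnit b
  · obtain ⟨u, rfl⟩ := hb
    simp
  · simp only [Ring.inverse_non_unit b hb, mul_zero, hb, and_false, iff_false]
    intro h
    have := subsingleton_of_zero_eq_one h
    exact hb (isUnit_of_subsingleton b)

section CommRing

variable {R : Type*} [CommRing R]

noncomputable def negDivOneSub (t : R) : R := -(t * (1 - t)⁻¹ʳ)

variable {t : R}

lemma one_sub_negDivOneSub (ht : IsUnit (1 - t)) : 1 - negDivOneSub t = (1 - t)⁻¹ʳ := by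
  have := Ring.mul_inverse_cancel _ ht
  unfold negDivOneSub
  linear_combination -this

lemma isUnit_one_sub_negDivOneSub (ht : IsUnit (1 - t)) : IsUnit (1 - negDivOneSub t) := by
  rw [one_sub_negDivOneSub ht]
  exact ht.ringInverse

lemma negDivOneSub_negDivOneSub (ht : IsUnit (1 - t)) : negDivOneSub (negDivOneSub t) = t := by
  rw [negDivOneSub, one_sub_negDivOneSub ht, Ring.inverse_inverse ht, negDivOneSub]
  linear_combination t * Ring.mul_inverse_cancel _ ht

lemma isUnit_negDivOneSub_iff (ht : IsUnit (1 - t)) : IsUnit (negDivOneSub t) ↔ IsUnit t := by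
  rw [negDivOneSub, IsUnit.neg_iff, IsUnit.mul_iff, and_iff_left ht.ringInverse]

lemma mul_eq_one_sub_mul_one_sub_iff (ht : IsUnit (1 - t)) {s x : R} :
    s * t * x = (1 - s) * (1 - t) ↔ s * (1 - x * negDivOneSub t) = 1 := by
  have h := Ring.mul_inverse_cancel _ ht
  unfold negDivOneSub
  constructor <;> intro e
  · linear_combination (1 - t)⁻¹ʳ * e + (1 - s) * h
  · linear_combination (1 - t) * e - s * x * t * h

variable [Fintype R]

open Classical in
noncomputable def solutionPairs (x : R) : Finset (R × R) :=
  {p | p.1 * p.2 * x = (1 - p.1) * (1 - p.2) ∧ IsUnit ((1 - p.1) * (1 - p.2))}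

open Classical in
noncomputable def admissibleParams (x : R) : Finset R :=
  {y | IsUnit y ∧ IsUnit (1 - y) ∧ IsUnit (1 - x * y)}

lemma mem_solutionPairs {x s t : R} :
    (s, t) ∈ solutionPairs x ↔ s * t * x = (1 - s) * (1 - t) ∧ IsUnit ((1 - s) * (1 - t)) := by
  simp [solutionPairs]

lemma mem_admissibleParams {x y : R} :
    y ∈ admissibleParams x ↔ IsUnit y ∧ IsUnit (1 - y) ∧ IsUnit (1 - x * y) := by
  simp [admissibleParams]

lemma isUnit_and_mul_eq_one_of_mem_solutionPairs {x s t : R} (h : (s, t) ∈ solutionPairs x) :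
    IsUnit t ∧ IsUnit (1 - t) ∧ s * (1 - x * negDivOneSub t) = 1 := by
  obtain ⟨heq, hu⟩ := mem_solutionPairs.mp h
  have ht : IsUnit (1 - t) := isUnit_of_mul_isUnit_right hu
  exact ⟨isUnit_of_mul_isUnit_right (isUnit_of_mul_isUnit_left (heq ▸ hu)), ht,
    (mul_eq_one_sub_mul_one_sub_iff ht).mp heq⟩

lemma sum_solutionPairs_eq {M : Type*} [AddCommMonoid M] {x : R} (hx : IsUnit x)
    (f : R × R → M) :
    ∑ p ∈ solutionPairs x, f p =
      ∑ y ∈ admissibleParams x, f ((1 - x * y)⁻¹ʳ, negDivOneSub y) := by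
  symm
  refine sum_nbij' (fun y ↦ ((1 - x * y)⁻¹ʳ, negDivOneSub y)) (fun p ↦ negDivOneSub p.2)
    ?_ ?_ ?_ ?_ fun _ _ ↦ rfl
  · intro y hy
    obtain ⟨hy, h1y, h1xy⟩ := mem_admissibleParams.mp hy
    have ht := isUnit_one_sub_negDivOneSub h1y
    have heq : (1 - x * y)⁻¹ʳ * negDivOneSub y * x =
        (1 - (1 - x * y)⁻¹ʳ) * (1 - negDivOneSub y) := by
      rw [mul_eq_one_sub_mul_one_sub_iff ht, negDivOneSub_negDivOneSub h1y,
        Ring.inverse_mul_cancel _ h1xy]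
    refine mem_solutionPairs.mpr ⟨heq, heq ▸ ?_⟩
    exact (h1xy.ringInverse.mul ((isUnit_negDivOneSub_iff h1y).mpr hy)).mul hx
  · rintro ⟨s, t⟩ hst
    obtain ⟨ht, h1t, hsol⟩ := isUnit_and_mul_eq_one_of_mem_solutionPairs hst
    exact mem_admissibleParams.mpr ⟨(isUnit_negDivOneSub_iff h1t).mpr ht,
      isUnit_one_sub_negDivOneSub h1t, IsUnit.of_mul_eq_one_right _ hsol⟩
  · intro y hy
    exact negDivOneSub_negDivOneSub (mem_admissibleParams.mp hy).2.1
  · rintro ⟨s, t⟩ hst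
    obtain ⟨-, h1t, hsol⟩ := isUnit_and_mul_eq_one_of_mem_solutionPairs hst
    have hu : IsUnit (1 - x * negDivOneSub t) := IsUnit.of_mul_eq_one_right _ hsol
    refine Prod.ext ?_ (negDivOneSub_negDivOneSub h1t)
    simpa using (Ring.inverse_mul_eq_iff_eq_mul _ 1 s hu).mpr (hsol.symm.trans (mul_comm _ _))

end CommRing

section DirichletCharacter

variable {q : ℕ}

lemma conjChar_apply (A : DirichletCharacter ℂ q) (z : ZMod q) : conjChar A z = A z⁻¹ʳ := by
  rw [← MulChar.inv_apply, ← MulChar.star_apply']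
  rfl

lemma conjChar_mul (A B : DirichletCharacter ℂ q) :
    conjChar (A * B) = conjChar A * conjChar B :=
  MulChar.ringHomComp_mul _ _ _

lemma apply_inverse_mul_apply_negDivOneSub_mul_conjChar_apply (A B C : DirichletCharacter ℂ q)
    {x y : ZMod q} (hy : IsUnit (1 - y)) :
    A (1 - x * y)⁻¹ʳ * B (negDivOneSub y) * conjChar C (1 - negDivOneSub y) =
      B (-1) * (B y * (conjChar B * C) (1 - y) * conjChar A (1 - x * y)) := by
  rw [one_sub_negDivOneSub hy, negDivOneSub, neg_eq_neg_one_mul, MulChar.mul_apply,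
    conjChar_apply, conjChar_apply, conjChar_apply, Ring.inverse_inverse hy, map_mul, map_mul]
  ring

variable [NeZero q]

lemma sum_eq_sum_admissibleParams (A B C : DirichletCharacter ℂ q) (x : ZMod q) :
    ∑ y, B y * (conjChar B * C) (1 - y) * conjChar A (1 - x * y) =
      ∑ y ∈ admissibleParams x, B y * (conjChar B * C) (1 - y) * conjChar A (1 - x * y) := by
  refine (sum_subset (subset_univ _) fun y _ hy ↦ ?_).symm
  simp only [mem_admissibleParams, not_and_or] at hy
  rcases hy with h | h | h <;> simp [MulChar.map_nonunit _ h]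

lemma dBinom_mul_dBinom_mul_apply (A B C χ : DirichletCharacter ℂ q) (x : ZMod q) :
    dBinom (A * χ) χ * dBinom (B * χ) (C * χ) * χ x =
      C (-1) / q ^ 2 * ∑ s, ∑ t, A s * B t * conjChar C (1 - t) *
        χ (s * t * x * ((1 - s) * (1 - t))⁻¹ʳ) := by
  have hχ : χ (-1) * χ (-1) = 1 := by rw [← map_mul, neg_one_mul, neg_neg, map_one]
  simp only [dBinom, jacobiSum, sum_mul, mul_sum]
  rw [sum_comm]
  refine sum_congr rfl fun s _ ↦ sum_congr rfl fun t _ ↦ ?_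
  simp only [conjChar_mul, MulChar.mul_apply, map_mul, Ring.mul_inverse_rev, ← conjChar_apply]
  linear_combination (A s * B t * conjChar C (1 - t) * χ s * χ t * χ x * conjChar χ (1 - s) *
    conjChar χ (1 - t) * C (-1) / q ^ 2) * hχ

lemma sum_dBinom_mul_dBinom_mul_apply (A B C : DirichletCharacter ℂ q) (x : ZMod q) :
    ∑ χ, dBinom (A * χ) χ * dBinom (B * χ) (C * χ) * χ x =
      C (-1) * q.totient / q ^ 2 *
        ∑ p ∈ solutionPairs x, A p.1 * B p.2 * conjChar C (1 - p.2) := by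
  simp only [dBinom_mul_dBinom_mul_apply, solutionPairs, sum_filter, Fintype.sum_prod_type]
  rw [← mul_sum, sum_comm, mul_sum, mul_sum]
  refine sum_congr rfl fun s _ ↦ ?_
  rw [sum_comm, mul_sum, mul_sum]
  refine sum_congr rfl fun t _ ↦ ?_
  rw [← mul_sum, DirichletCharacter.sum_characters_eq]
  simp only [Ring.mul_inverse_eq_one_iff]
  split_ifs <;> ring

end DirichletCharacter

theorem twoF₁_eq_binom_sum_general (q : ℕ) [NeZero q] (A B C : DirichletCharacter ℂ q) :
    ∀ x : ZMod q,
      ((1 : DirichletCharacter ℂ q) x * B (-1) * C (-1) / q) *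
          ∑ y : ZMod q, B y * (conjChar B * C) (1 - y) * conjChar A (1 - x * y) =
        (q / (Nat.totient q : ℂ)) *
          ∑ᶠ χ : DirichletCharacter ℂ q, dBinom (A * χ) χ * dBinom (B * χ) (C * χ) * χ x := by
  intro x
  rw [finsum_eq_sum_of_fintype]
  by_cases hx : IsUnit x
  swap
  · simp [MulChar.map_nonunit _ hx]
  have hq : (q : ℂ) ≠ 0 := NeZero.ne _
  have hφ : (q.totient : ℂ) ≠ 0 := Nat.cast_ne_zero.mpr (Nat.totient_pos.mpr (NeZero.pos q)).ne'
  rw [sum_dBinom_mul_dBinom_mul_apply, sum_solutionPairs_eq hx, sum_eq_sum_admissibleParams,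
    MulChar.one_apply hx, sum_congr rfl fun y hy ↦
      apply_inverse_mul_apply_negDivOneSub_mul_conjChar_apply A B C
        (mem_admissibleParams.mp hy).2.1, ← mul_sum]
  field_simp

theorem twoF₁_eq_binom_sum (p α : ℕ) (hp : p.Prime) (hodd : Odd p) (hα : 1 ≤ α)
    (q : ℕ) (hq : q = p ^ α) [NeZero q] (A B C : DirichletCharacter ℂ q) :
    ∀ x : ZMod q,
      ((1 : DirichletCharacter ℂ q) x * B (-1) * C (-1) / q) *
          ∑ y : ZMod q, B y * (conjChar B * C) (1 - y) * conjChar A (1 - x * y) =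
        (q / (Nat.totient q : ℂ)) *
          ∑ᶠ χ : DirichletCharacter ℂ q, dBinom (A * χ) χ * dBinom (B * χ) (C * χ) * χ x :=
  twoF₁_eq_binom_sum_general q A B C
end

section
/- Let q = p^α, where p is an odd prime and α ≥ 1 is an integer, and let A, B, C, D, E be complex-valued Dirichlet characters mod q. Then for every x ∈ ℤ/qℤ: ₃F₂(A,B,C;D,E|x) = (ε(x)·(B·D)(−1)/q²)·Σ_{y,z ∈ ℤ/qℤ} (A·Ē)(y)·(C̄E)(1−y)·B(z)·(B̄D)(1−z)·Ā(y−xz), where ε is the trivial character mod q. -/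
/-!
Write `ε` for the trivial character mod `q`. The character binomial theorem
`(q/φ(q)) ∑_χ binom(Aχ, χ) χ(s) = ε(s) Ā(1 - s)`, applied at `s = xz/y`, expands
`ε(xz) A(y) Ā(y - xz)` as `(q/φ(q)) ∑_χ binom(Aχ, χ) χ(xz) χ̄(y)`. As `ε(x) B(z) = ε(xz) B(z)`,
the double sum times `ε(x)` then separates into `(q/φ(q)) ∑_χ binom(Aχ, χ) χ(x)` times two
Jacobi sums, one in `y` and one in `z`. The reflection `J(A, B) = A(-1) J(A, (AB)⁻¹)`
identifies them with `q binom(Cχ, Eχ)` and `q (BD)(-1) binom(Bχ, Dχ)`.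
-/

open Finset

namespace MulChar

section CommMonoid

variable {R R' : Type*} [CommMonoid R] [CommMonoidWithZero R']

lemma apply_mul_one_apply (χ : MulChar R R') (a : R) : χ a * (1 : MulChar R R') a = χ a := by
  rw [← mul_apply, mul_one]

lemma inv_apply_mul_apply {χ : MulChar R R'} {a : R} (ha : IsUnit a) : χ⁻¹ a * χ a = 1 := by
  rw [← mul_apply, inv_mul, one_apply ha]

end CommMonoid

variable {R R' : Type*} [CommRing R] [CommMonoidWithZero R']

lemma apply_neg_one_mul_self (χ : MulChar R R') : χ (-1) * χ (-1) = 1 := by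
  rw [← map_mul, neg_one_mul, neg_neg, map_one]

lemma inv_apply_neg_one (χ : MulChar R R') : χ⁻¹ (-1) = χ (-1) := by
  simpa [inv_apply] using congrArg χ (Ring.inverse_unit (-1 : Rˣ))

end MulChar

section JacobiSum

variable {R R' : Type*} [CommRing R] [Fintype R] [CommRing R']

-- The substitution `x ↦ -x / (1 - x)` is an involution of `{x | 1 - x ∈ Rˣ}` exchanging the summands.
theorem jacobiSum_eq_apply_neg_one_mul_jacobiSum_inv (χ ψ : MulChar R R') :
    jacobiSum χ ψ = χ (-1) * jacobiSum χ (χ * ψ)⁻¹ := by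
  classical
  have hsupp (φ : MulChar R R') (x : R) (hx : χ x * φ (1 - x) ≠ 0) : IsUnit (1 - x) := by
    by_contra h
    exact hx (by rw [φ.map_nonunit h, mul_zero])
  let f (x : R) : R := -1 * x * Ring.inverse (1 - x)
  have hf {x : R} (hx : IsUnit (1 - x)) : 1 - f x = Ring.inverse (1 - x) := by
    linear_combination -(Ring.mul_inverse_cancel _ hx)
  have hff {x : R} (hx : IsUnit (1 - x)) : f (f x) = x := by
    change -1 * f x * Ring.inverse (1 - f x) = x
    rw [hf hx, Ring.inverse_inverse hx]
    linear_combination x * Ring.mul_inverse_cancel _ hx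
  have hmem {x : R} (hx : x ∈ univ.filter fun x ↦ IsUnit (1 - x)) :
      f x ∈ univ.filter fun x ↦ IsUnit (1 - x) := by
    rw [mem_filter] at hx ⊢
    exact ⟨mem_univ _, hf hx.2 ▸ hx.2.ringInverse⟩
  rw [jacobiSum, jacobiSum, ← sum_filter_of_ne fun x _ ↦ hsupp ψ x,
    ← sum_filter_of_ne fun x _ ↦ hsupp (χ * ψ)⁻¹ x, mul_sum]
  refine sum_nbij' f f (fun x hx ↦ hmem hx) (fun x hx ↦ hmem hx)
    (fun x hx ↦ hff (mem_filter.1 hx).2) (fun x hx ↦ hff (mem_filter.1 hx).2) fun x hx ↦ ?_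
  have hx := (mem_filter.1 hx).2
  rw [hf hx, MulChar.inv_apply, Ring.inverse_inverse hx, map_mul, map_mul, ← MulChar.inv_apply,
    MulChar.mul_apply]
  linear_combination (-χ x * ψ (1 - x)) * MulChar.inv_apply_mul_apply (χ := χ) hx
    - χ x * ψ (1 - x) * χ⁻¹ (1 - x) * χ (1 - x) * χ.apply_neg_one_mul_self

end JacobiSum

namespace DirichletCharacter

lemma inv_apply_of_isUnit {R : Type*} [CommMonoidWithZero R] {n : ℕ} (χ : DirichletCharacter R n)
    {a : ZMod n} (ha : IsUnit a) : χ⁻¹ a = χ a⁻¹ := by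
  obtain ⟨u, rfl⟩ := ha
  rw [MulChar.inv_apply, Ring.inverse_unit, ZMod.inv_coe_unit]

/-- Fourier inversion on `(ZMod n)ˣ`. -/
lemma sum_apply_mul_sum_mul_apply {n : ℕ} [NeZero n] (g : ZMod n → ℂ) {t : ZMod n}
    (ht : IsUnit t) :
    ∑ χ : DirichletCharacter ℂ n, χ t * ∑ x, g x * χ x = n.totient * g t⁻¹ := by
  have hcond (x : ZMod n) : t * x = 1 ↔ t⁻¹ = x :=
    ⟨fun h ↦ ZMod.inv_eq_of_mul_eq_one n t x h, fun h ↦ h ▸ ZMod.mul_inv_of_unit t ht⟩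
  calc ∑ χ : DirichletCharacter ℂ n, χ t * ∑ x, g x * χ x
      = ∑ x, g x * ∑ χ : DirichletCharacter ℂ n, χ (t * x) := by
        simp_rw [mul_sum, map_mul]
        rw [sum_comm]
        exact sum_congr rfl fun _ _ ↦ sum_congr rfl fun _ _ ↦ by ring
    _ = n.totient * g t⁻¹ := by
        simp_rw [sum_characters_eq, hcond, mul_ite, mul_zero, sum_ite_eq, mem_univ, if_true,
          mul_comm]

end DirichletCharacter

section Binomial

open DirichletCharacter

variable {q : ℕ} [NeZero q]

lemma dBinom_mul_self (A χ : DirichletCharacter ℂ q) :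
    dBinom (A * χ) χ = A (-1) / q * jacobiSum (A * χ) A⁻¹ := by
  rw [dBinom, conjChar_eq_inv, jacobiSum_eq_apply_neg_one_mul_jacobiSum_inv, mul_inv_cancel_right,
    MulChar.mul_apply]
  linear_combination A (-1) / q * jacobiSum (A * χ) A⁻¹ * χ.apply_neg_one_mul_self

lemma mul_dBinom_eq_jacobiSum_inv_inv_mul (M N : DirichletCharacter ℂ q) :
    q * dBinom M N = jacobiSum N⁻¹ (M⁻¹ * N) := by
  have hq : (q : ℂ) ≠ 0 := Nat.cast_ne_zero.mpr (NeZero.ne q)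
  rw [jacobiSum_eq_apply_neg_one_mul_jacobiSum_inv, jacobiSum_comm, MulChar.inv_apply_neg_one,
    dBinom, conjChar_eq_inv, show (N⁻¹ * (M⁻¹ * N))⁻¹ = M by simp]
  field_simp

lemma mul_dBinom_eq_jacobiSum_inv_mul (M N : DirichletCharacter ℂ q) :
    q * (M * N) (-1) * dBinom M N = jacobiSum M (M⁻¹ * N) := by
  have hq : (q : ℂ) ≠ 0 := Nat.cast_ne_zero.mpr (NeZero.ne q)
  rw [jacobiSum_eq_apply_neg_one_mul_jacobiSum_inv, mul_inv_cancel_left, dBinom, conjChar_eq_inv,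
    MulChar.mul_apply]
  field_simp
  linear_combination M (-1) * jacobiSum M N⁻¹ * N.apply_neg_one_mul_self

/-- The character analogue of `(1 - t)^(-a) = ∑_k binom(a + k, k) t^k`. -/
theorem mul_sum_dBinom_mul_apply (A : DirichletCharacter ℂ q) (t : ZMod q) :
    q / q.totient * ∑ χ : DirichletCharacter ℂ q, dBinom (A * χ) χ * χ t
      = (1 : DirichletCharacter ℂ q) t * A⁻¹ (1 - t) := by
  by_cases ht : IsUnit t
  swap
  · simp [MulChar.map_nonunit _ ht]
  have hq : (q : ℂ) ≠ 0 := Nat.cast_ne_zero.mpr (NeZero.ne q)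
  have hφ : (q.totient : ℂ) ≠ 0 := Nat.cast_ne_zero.mpr (Nat.totient_pos.mpr (NeZero.pos q)).ne'
  have hsum : ∑ χ : DirichletCharacter ℂ q, dBinom (A * χ) χ * χ t
      = A (-1) / q * ∑ χ : DirichletCharacter ℂ q, χ t * ∑ x, A x * A⁻¹ (1 - x) * χ x := by
    simp only [dBinom_mul_self, jacobiSum, MulChar.mul_apply, mul_sum, sum_mul]
    refine sum_congr rfl fun χ _ ↦ sum_congr rfl fun x _ ↦ ?_
    ring
  have hinv : A⁻¹ t * A⁻¹ (1 - t⁻¹) = A⁻¹ (-1) * A⁻¹ (1 - t) := by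
    rw [← map_mul, ← map_mul]
    congr 1
    linear_combination -(ZMod.mul_inv_of_unit t ht)
  rw [hsum, sum_apply_mul_sum_mul_apply _ ht, MulChar.one_apply ht, ← inv_apply_of_isUnit _ ht]
  rw [MulChar.inv_apply_neg_one] at hinv
  field_simp
  linear_combination A (-1) * hinv + A⁻¹ (1 - t) * A.apply_neg_one_mul_self

theorem one_apply_mul_apply_mul_inv_apply_sub (A : DirichletCharacter ℂ q) (t y : ZMod q) :
    (1 : DirichletCharacter ℂ q) t * A y * A⁻¹ (y - t)
      = q / q.totient * ∑ χ : DirichletCharacter ℂ q, dBinom (A * χ) χ * χ t * χ⁻¹ y := by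
  by_cases hy : IsUnit y
  swap
  · simp [MulChar.map_nonunit _ hy]
  have hy' : IsUnit y⁻¹ := .of_mul_eq_one _ (ZMod.inv_mul_of_unit y hy)
  have hsub : 1 - t * y⁻¹ = y⁻¹ * (y - t) := by
    linear_combination -(ZMod.inv_mul_of_unit y hy)
  simp_rw [inv_apply_of_isUnit _ hy, mul_assoc, ← map_mul]
  rw [mul_sum_dBinom_mul_apply, map_mul, MulChar.one_apply hy', hsub, map_mul,
    ← inv_apply_of_isUnit _ hy, inv_inv]
  ring

end Binomial

section Hypergeometric

variable {q : ℕ} [NeZero q] (A B C D E : DirichletCharacter ℂ q) (x : ZMod q)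

theorem one_apply_mul_sum_sum_eq_sum_jacobiSum :
    (1 : DirichletCharacter ℂ q) x * ∑ y, ∑ z,
        (A * E⁻¹) y * (C⁻¹ * E) (1 - y) * B z * (B⁻¹ * D) (1 - z) * A⁻¹ (y - x * z)
      = q / q.totient * ∑ χ : DirichletCharacter ℂ q,
          dBinom (A * χ) χ * χ x * jacobiSum (E * χ)⁻¹ (C⁻¹ * E) * jacobiSum (B * χ) (B⁻¹ * D) := by
  calc (1 : DirichletCharacter ℂ q) x * ∑ y, ∑ z,
        (A * E⁻¹) y * (C⁻¹ * E) (1 - y) * B z * (B⁻¹ * D) (1 - z) * A⁻¹ (y - x * z)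
      = ∑ y, ∑ z, E⁻¹ y * (C⁻¹ * E) (1 - y) * (B z * (B⁻¹ * D) (1 - z)) *
          ((1 : DirichletCharacter ℂ q) (x * z) * A y * A⁻¹ (y - x * z)) := by
        simp_rw [mul_sum, map_mul, MulChar.mul_apply]
        refine sum_congr rfl fun y _ ↦ sum_congr rfl fun z _ ↦ ?_
        nth_rw 1 [← B.apply_mul_one_apply z]
        ring
    _ = ∑ y, ∑ z, E⁻¹ y * (C⁻¹ * E) (1 - y) * (B z * (B⁻¹ * D) (1 - z)) *
          (q / q.totient * ∑ χ : DirichletCharacter ℂ q, dBinom (A * χ) χ * χ (x * z) * χ⁻¹ y) := by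
        simp_rw [one_apply_mul_apply_mul_inv_apply_sub]
    _ = _ := by
        simp only [jacobiSum, mul_inv, MulChar.mul_apply, map_mul, mul_sum, sum_mul]
        rw [sum_comm_cycle]
        refine sum_congr rfl fun χ _ ↦ ?_
        rw [sum_comm]
        exact sum_congr rfl fun _ _ ↦ sum_congr rfl fun _ _ ↦ by ring

lemma dBinom_mul_apply_mul_jacobiSum_mul_jacobiSum (χ : DirichletCharacter ℂ q) :
    dBinom (A * χ) χ * χ x * jacobiSum (E * χ)⁻¹ (C⁻¹ * E) * jacobiSum (B * χ) (B⁻¹ * D)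
      = q ^ 2 * (B * D) (-1) *
          (dBinom (A * χ) χ * dBinom (B * χ) (D * χ) * dBinom (C * χ) (E * χ) * χ x) := by
  have hcancel (M N : DirichletCharacter ℂ q) : (M * χ)⁻¹ * (N * χ) = M⁻¹ * N := by
    rw [mul_inv, mul_mul_mul_comm, inv_mul_cancel, mul_one]
  rw [← hcancel C E, ← hcancel B D, ← mul_dBinom_eq_jacobiSum_inv_inv_mul,
    ← mul_dBinom_eq_jacobiSum_inv_mul]
  simp only [MulChar.mul_apply]
  linear_combination q ^ 2 * B (-1) * D (-1) * dBinom (A * χ) χ * dBinom (B * χ) (D * χ) *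
    dBinom (C * χ) (E * χ) * χ x * χ.apply_neg_one_mul_self

end Hypergeometric

theorem threeF₂_double_sum'_general (q : ℕ) [NeZero q] (A B C D E : DirichletCharacter ℂ q) :
    ∀ x : ZMod q,
      threeF₂ A B C D E x =
        ((1 : DirichletCharacter ℂ q) x * (B * D) (-1) / (q : ℂ) ^ 2) *
          ∑ y : ZMod q, ∑ z : ZMod q,
            (A * conjChar E) y * (conjChar C * E) (1 - y) * B z * (conjChar B * D) (1 - z) *
              conjChar A (y - x * z) := by
  intro x
  have hq : (q : ℂ) ≠ 0 := Nat.cast_ne_zero.mpr (NeZero.ne q)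
  simp only [conjChar_eq_inv]
  calc threeF₂ A B C D E x
      = (B * D) (-1) / q ^ 2 * (q / q.totient * ∑ χ : DirichletCharacter ℂ q,
          dBinom (A * χ) χ * χ x * jacobiSum (E * χ)⁻¹ (C⁻¹ * E) *
            jacobiSum (B * χ) (B⁻¹ * D)) := by
        simp only [threeF₂, finsum_eq_sum_of_fintype,
          dBinom_mul_apply_mul_jacobiSum_mul_jacobiSum, ← mul_sum]
        field_simp
        rw [sq, MulChar.apply_neg_one_mul_self, mul_one]
    _ = _ := by
        rw [← one_apply_mul_sum_sum_eq_sum_jacobiSum]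
        ring

theorem threeF₂_double_sum' (p α : ℕ) (hp : p.Prime) (hodd : Odd p) (hα : 1 ≤ α)
    (q : ℕ) (hq : q = p ^ α) [NeZero q] (A B C D E : DirichletCharacter ℂ q) :
    ∀ x : ZMod q,
      threeF₂ A B C D E x =
        ((1 : DirichletCharacter ℂ q) x * (B * D) (-1) / (q : ℂ) ^ 2) *
          ∑ y : ZMod q, ∑ z : ZMod q,
            (A * conjChar E) y * (conjChar C * E) (1 - y) * B z * (conjChar B * D) (1 - z) *
              conjChar A (y - x * z) :=
  threeF₂_double_sum'_general q A B C D E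
end

section
/- Let q = p^α, where p is an odd prime and α ≥ 1 is an integer, and let A, B, C, D, E be complex-valued Dirichlet characters mod q. Then ₃F₂(A,B,C;D,E|1) = ₃F₂(B·D̄, A·D̄, C·D̄; D̄, E·D̄ | 1). -/
open Finset

/-- Reindex the left-hand sum by `χ ↦ D χ`: every binomial factor absorbs the shift, only
`χ x` leaves the factor `D x`. -/
lemma threeF₂_mul_inv {q : ℕ} [NeZero q] (A B C D E : DirichletCharacter ℂ q) (x : ZMod q) :
    threeF₂ (B * D⁻¹) (A * D⁻¹) (C * D⁻¹) D⁻¹ (E * D⁻¹) x = D x * threeF₂ A B C D E x := by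
  unfold threeF₂
  rw [finsum_eq_sum_of_fintype, finsum_eq_sum_of_fintype, mul_left_comm (D x),
    Finset.mul_sum _ _ (D x)]
  congr 1
  symm
  refine Fintype.sum_equiv (Equiv.mulLeft D) _ _ fun χ => ?_
  have cancel : ∀ X : DirichletCharacter ℂ q, X * D⁻¹ * (D * χ) = X * χ := fun X => by group
  simp only [Equiv.coe_mulLeft, cancel, inv_mul_cancel_left, MulChar.coeToFun_mul,
    Pi.mul_apply]
  ring

theorem threeF₂_transform₁_general (q : ℕ) [NeZero q] (A B C D E : DirichletCharacter ℂ q) :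
    threeF₂ A B C D E 1 =
      threeF₂ (B * conjChar D) (A * conjChar D) (C * conjChar D) (conjChar D) (E * conjChar D)
        1 := by
  simp only [conjChar_eq_inv, threeF₂_mul_inv, MulChar.map_one, one_mul]

theorem threeF₂_transform₁ (p α : ℕ) (hp : p.Prime) (hodd : Odd p) (hα : 1 ≤ α)
    (q : ℕ) (hq : q = p ^ α) [NeZero q] (A B C D E : DirichletCharacter ℂ q) :
    threeF₂ A B C D E 1 =
      threeF₂ (B * conjChar D) (A * conjChar D) (C * conjChar D) (conjChar D) (E * conjChar D)
        1 :=
  threeF₂_transform₁_general q A B C D E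
end

section
/- Let p ≡ 1 (mod 8) be a prime and α ≥ 1 an integer. Let χ₄ be a complex-valued Dirichlet character mod p^α of order 4 and let φ = χ₄² be the quadratic character mod p^α. Set ξ = J(χ₄, φ). Then the double sum S(i₁,i₂,i₃) := Σ_{x: p∤x, p∤1−x} Σ_{y: p∤y, p∤1−y, p∤x−y} χ₄^{i₁}(y)·χ₄^{i₂}(1−y)·χ₄^{i₃}(x−y) (over x, y ∈ ℤ/p^αℤ) satisfies: S(1,1,1) = −2ξp^{α−1}; S(1,1,−1) = 2p^{2α−2}; S(1,−1,1) = −p^{α−1}(ξ̄ − p^{α−1}); and S(1,−1,−1) = −p^{α−1}(ξ − p^{α−1}), where ξ̄ is the complex conjugate of ξ. -/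
/-!
Write `q = p ^ (k + 1)`. A character `ψ` with `ψ ^ n = 1`, `n` prime to `p`, is trivial on the
units `1 + m` with `p ∣ m`, because `(1 + m) ^ p ^ k = 1`; hence `ψ (a + m) = ψ a` for every
non-unit `m`. In the sum over `x` with `x` and `1 - x` units, the excluded `x` therefore contribute
`p ^ k` copies of `ψ (-y)` and of `ψ (1 - y)` to a complete character sum that vanishes, so the
double sum equals `-p ^ k (J(Aψ, B) + J(A, Bψ))`, using `ψ (-1) = 1`, which holds because `-1` is a
fourth power modulo `p ≡ 1 [MOD 8]`. The four cases then follow from `J(1, ψ) = -p ^ k` and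
`conj J(χ₄, χ₄²) = J(χ₄², χ₄⁻¹)`.
-/

open Finset

open scoped Classical

theorem Nat.coprime_four_of_odd {p : ℕ} (hp : Odd p) : Nat.Coprime 4 p :=
  (Nat.coprime_two_left.2 hp).pow_left 2

namespace ZMod

variable {p : ℕ} [hp : Fact p.Prime] {k : ℕ}

theorem not_isUnit_iff_natCast_dvd {x : ZMod (p ^ (k + 1))} :
    ¬IsUnit x ↔ (p : ZMod (p ^ (k + 1))) ∣ x := by
  constructor
  · intro hx
    rw [← natCast_zmod_val x, isUnit_natCast_iff_not_dvd_pow hp.out k.succ_pos, not_not] at hx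
    obtain ⟨t, ht⟩ := hx
    exact ⟨t, by rw [← natCast_zmod_val x, ht, Nat.cast_mul]⟩
  · rintro ⟨t, rfl⟩ h
    exact prime_natCast_not_isUnit_pow hp.out k.succ_pos (isUnit_of_mul_isUnit_left h)

theorem isUnit_add_iff_of_not_isUnit {m : ZMod (p ^ (k + 1))} (hm : ¬IsUnit m)
    (a : ZMod (p ^ (k + 1))) : IsUnit (a + m) ↔ IsUnit a := by
  rw [← not_iff_not, not_isUnit_iff_natCast_dvd, not_isUnit_iff_natCast_dvd]
  exact dvd_add_left (not_isUnit_iff_natCast_dvd.1 hm)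

theorem isUnit_one_sub_of_not_isUnit {x : ZMod (p ^ (k + 1))} (hx : ¬IsUnit x) :
    IsUnit (1 - x) := by
  rw [sub_eq_add_neg, isUnit_add_iff_of_not_isUnit (by rwa [IsUnit.neg_iff])]
  exact isUnit_one

theorem one_add_pow_eq_one_of_not_isUnit {m : ZMod (p ^ (k + 1))} (hm : ¬IsUnit m) :
    (1 + m) ^ p ^ k = 1 := by
  have h := dvd_sub_pow_of_dvd_sub (a := 1 + m) (b := 1)
    (by simpa using not_isUnit_iff_natCast_dvd.1 hm) k
  rwa [← Nat.cast_pow, natCast_self, zero_dvd_iff, one_pow, sub_eq_zero] at h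

theorem card_filter_not_isUnit : #{x : ZMod (p ^ (k + 1)) | ¬IsUnit x} = p ^ k := by
  have hunits : #{x : ZMod (p ^ (k + 1)) | IsUnit x} = p ^ k * (p - 1) := by
    rw [← Nat.totient_prime_pow_succ hp.out, ← card_units_eq_totient, ← card_univ,
      ← card_map ⟨Units.val, Units.val_injective⟩]
    congr 1
    ext x
    rw [mem_filter_univ, mem_map]
    simp [IsUnit]
  have hsplit := card_filter_add_card_filter_not (s := univ) (IsUnit (M := ZMod (p ^ (k + 1))))
  rw [hunits, card_univ, card] at hsplit
  have hp' : p ^ (k + 1) = p ^ k * (p - 1) + p ^ k := by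
    rw [← Nat.mul_succ, Nat.succ_eq_add_one, Nat.sub_add_cancel hp.out.one_le, pow_succ]
  omega

theorem exists_pow_four_eq_neg_one (hp8 : p % 8 = 1) : ∃ b : ZMod p, b ^ 4 = -1 := by
  obtain ⟨a, ha⟩ := ZMod.exists_sq_eq_neg_one_iff.mpr (by omega : p % 4 ≠ 3)
  have ha0 : a ≠ 0 := by rintro rfl; simp at ha
  obtain ⟨b, rfl⟩ := (euler_criterion p ha0).mpr <| by
    rw [show p / 2 = 2 * (p / 4) by omega, pow_mul, sq, ← ha]
    exact Even.neg_one_pow ⟨p / 8, by omega⟩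
  exact ⟨b, by rw [ha]; ring⟩

theorem sum_filter_not_isUnit_of_forall {R : Type*} [Semiring R] {f : ZMod (p ^ (k + 1)) → R}
    {c : R} (hf : ∀ x, ¬IsUnit x → f x = c) : ∑ x with ¬IsUnit x, f x = p ^ k * c := by
  rw [sum_congr rfl fun x hx => hf x (mem_filter.1 hx).2, sum_const, card_filter_not_isUnit,
    nsmul_eq_mul, Nat.cast_pow]

end ZMod

namespace MulChar

variable {p : ℕ} [hp : Fact p.Prime] {k : ℕ}

section Values

variable {R : Type*} [CommMonoidWithZero R] {ψ : MulChar (ZMod (p ^ (k + 1))) R} {n : ℕ}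

theorem apply_one_add_of_not_isUnit (hn : n.Coprime p) (hψ : ψ ^ n = 1)
    {m : ZMod (p ^ (k + 1))} (hm : ¬IsUnit m) : ψ (1 + m) = 1 := by
  have hu : IsUnit (1 + m) := (ZMod.isUnit_add_iff_of_not_isUnit hm 1).2 isUnit_one
  have hn0 : n ≠ 0 := by
    rintro rfl
    exact hp.out.ne_one (Nat.coprime_zero_left _ |>.1 hn)
  have h₁ : ψ (1 + m) ^ n = 1 := by rw [← pow_apply' ψ hn0, hψ, one_apply hu]
  have h₂ : ψ (1 + m) ^ p ^ k = 1 := by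
    rw [← map_pow, ZMod.one_add_pow_eq_one_of_not_isUnit hm, map_one]
  simpa [(hn.pow_right k).gcd_eq_one] using pow_gcd_eq_one.2 ⟨h₁, h₂⟩

theorem apply_add_of_not_isUnit (hn : n.Coprime p) (hψ : ψ ^ n = 1) (a : ZMod (p ^ (k + 1)))
    {m : ZMod (p ^ (k + 1))} (hm : ¬IsUnit m) : ψ (a + m) = ψ a := by
  by_cases ha : IsUnit a
  · obtain ⟨u, rfl⟩ := ha
    have hm' : ¬IsUnit (↑u⁻¹ * m) := fun h => hm (by simpa using u.isUnit.mul h)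
    rw [show (u : ZMod (p ^ (k + 1))) + m = u * (1 + ↑u⁻¹ * m) by
        rw [mul_add, mul_one, ← mul_assoc, Units.mul_inv, one_mul],
      map_mul, apply_one_add_of_not_isUnit hn hψ hm', mul_one]
  · rw [map_nonunit ψ ha, map_nonunit ψ (by rwa [ZMod.isUnit_add_iff_of_not_isUnit hm])]

theorem apply_sub_of_not_isUnit (hn : n.Coprime p) (hψ : ψ ^ n = 1) (a : ZMod (p ^ (k + 1)))
    {m : ZMod (p ^ (k + 1))} (hm : ¬IsUnit m) : ψ (a - m) = ψ a := by
  rw [sub_eq_add_neg, apply_add_of_not_isUnit hn hψ a (by rwa [IsUnit.neg_iff])]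

theorem apply_neg_one_of_pow_four_eq_one (hp8 : p % 8 = 1) (hψ : ψ ^ 4 = 1) : ψ (-1) = 1 := by
  have h4 := Nat.coprime_four_of_odd (Nat.odd_iff.2 (by omega : p % 2 = 1))
  obtain ⟨b, hb⟩ := ZMod.exists_pow_four_eq_neg_one hp8
  set c : ZMod (p ^ (k + 1)) := ((b.val : ℕ) : ZMod (p ^ (k + 1)))
  have hm : ¬IsUnit (c ^ 4 + 1) := by
    have hdvd : p ∣ b.val ^ 4 + 1 := by
      rw [← ZMod.natCast_eq_zero_iff]
      push_cast
      rw [ZMod.natCast_zmod_val, hb, neg_add_cancel]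
    rw [ZMod.not_isUnit_iff_natCast_dvd]
    simpa [c] using Nat.cast_dvd_cast (α := ZMod (p ^ (k + 1))) hdvd
  have hc : IsUnit c := by
    rw [← isUnit_pow_iff four_ne_zero, show c ^ 4 = -1 + (c ^ 4 + 1) by ring,
      ZMod.isUnit_add_iff_of_not_isUnit hm]
    exact isUnit_one.neg
  calc ψ (-1) = ψ (c ^ 4 - (c ^ 4 + 1)) := by ring_nf
    _ = ψ c ^ 4 := by rw [apply_sub_of_not_isUnit h4 hψ _ hm, map_pow]
    _ = 1 := by rw [← pow_apply' ψ four_ne_zero, hψ, one_apply hc]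

end Values

section Sums

variable {R : Type*} [CommRing R] [IsDomain R] {ψ : MulChar (ZMod (p ^ (k + 1))) R} {n : ℕ}

theorem jacobiSum_one_left_of_ne_one (hn : n.Coprime p) (hψ : ψ ^ n = 1) (hψ1 : ψ ≠ 1) :
    jacobiSum 1 ψ = -(p : R) ^ k := by
  have hsplit : ∀ y : ZMod (p ^ (k + 1)),
      (1 : MulChar _ R) y * ψ (1 - y) = ψ (1 - y) - if ¬IsUnit y then ψ (1 - y) else 0 := by
    intro y
    by_cases hy : IsUnit y
    · simp [hy, one_apply hy]
    · simp [hy]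
  have hsum : ∑ y : ZMod (p ^ (k + 1)), ψ (1 - y) = 0 := by
    simpa using (Equiv.subLeft (1 : ZMod (p ^ (k + 1)))).sum_comp ψ ▸ sum_eq_zero_of_ne_one hψ1
  rw [jacobiSum, sum_congr rfl fun y _ => hsplit y, sum_sub_distrib, ← sum_filter, hsum,
    ZMod.sum_filter_not_isUnit_of_forall (c := 1)
      fun y hy => by rw [apply_sub_of_not_isUnit hn hψ 1 hy, map_one]]
  ring

theorem sum_ite_isUnit_and_isUnit_one_sub (hn : n.Coprime p) (hψ : ψ ^ n = 1) (hψ1 : ψ ≠ 1)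
    (y : ZMod (p ^ (k + 1))) :
    ∑ x, (if IsUnit x ∧ IsUnit (1 - x) then ψ (x - y) else 0) =
      -(p : R) ^ k * (ψ (-y) + ψ (1 - y)) := by
  have hsplit : ∀ x : ZMod (p ^ (k + 1)),
      (if IsUnit x ∧ IsUnit (1 - x) then ψ (x - y) else 0) =
        ψ (x - y) - (if ¬IsUnit x then ψ (x - y) else 0) -
          if ¬IsUnit (1 - x) then ψ (x - y) else 0 := by
    intro x
    by_cases hx : IsUnit x
    · by_cases hx' : IsUnit (1 - x) <;> simp [hx, hx']
    · simp [hx, ZMod.isUnit_one_sub_of_not_isUnit hx]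
  have hsum : ∑ x : ZMod (p ^ (k + 1)), ψ (x - y) = 0 := by
    simpa using (Equiv.subRight y).sum_comp ψ ▸ sum_eq_zero_of_ne_one hψ1
  have hsum₀ : ∑ x : ZMod (p ^ (k + 1)), (if ¬IsUnit x then ψ (x - y) else 0) =
      p ^ k * ψ (-y) := by
    rw [← sum_filter]
    exact ZMod.sum_filter_not_isUnit_of_forall fun x hx => by
      rw [sub_eq_neg_add, apply_add_of_not_isUnit hn hψ _ hx]
  have hsum₁ : ∑ x : ZMod (p ^ (k + 1)), (if ¬IsUnit (1 - x) then ψ (x - y) else 0) =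
      p ^ k * ψ (1 - y) := by
    rw [← (Equiv.subLeft 1).sum_comp]
    simp only [Equiv.subLeft_apply, sub_sub_cancel]
    rw [← sum_filter]
    exact ZMod.sum_filter_not_isUnit_of_forall fun x hx => by
      rw [sub_right_comm, apply_sub_of_not_isUnit hn hψ _ hx]
  rw [sum_congr rfl fun x _ => hsplit x, sum_sub_distrib, sum_sub_distrib, hsum, hsum₀, hsum₁]
  ring

theorem sum_sum_ite_isUnit_mul_apply_sub (hn : n.Coprime p) (hψ : ψ ^ n = 1) (hψ1 : ψ ≠ 1)
    (hψneg : ψ (-1) = 1) (A B : MulChar (ZMod (p ^ (k + 1))) R) :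
    ∑ x, ∑ y, (if IsUnit x ∧ IsUnit (1 - x) ∧ IsUnit y ∧ IsUnit (1 - y) ∧ IsUnit (x - y) then
        A y * B (1 - y) * ψ (x - y) else 0) =
      -(p : R) ^ k * (jacobiSum (A * ψ) B + jacobiSum A (B * ψ)) := by
  have hsplit : ∀ x y : ZMod (p ^ (k + 1)),
      (if IsUnit x ∧ IsUnit (1 - x) ∧ IsUnit y ∧ IsUnit (1 - y) ∧ IsUnit (x - y) then
        A y * B (1 - y) * ψ (x - y) else 0) =
        A y * B (1 - y) * if IsUnit x ∧ IsUnit (1 - x) then ψ (x - y) else 0 := by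
    intro x y
    by_cases hy : IsUnit y <;> by_cases hy' : IsUnit (1 - y) <;>
      by_cases hxy : IsUnit (x - y) <;> simp [*]
  have hneg : ∀ y, ψ (-y) = ψ y := fun y => by rw [← neg_one_mul, map_mul, hψneg, one_mul]
  simp only [hsplit]
  rw [sum_comm]
  simp only [← mul_sum, sum_ite_isUnit_and_isUnit_one_sub hn hψ hψ1, hneg]
  rw [jacobiSum, jacobiSum, ← sum_add_distrib, mul_sum]
  refine sum_congr rfl fun y _ => ?_
  rw [mul_apply, mul_apply]
  ring

end Sums

end MulChar

open scoped Classical in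
theorem double_char_sums (p α : ℕ) (hp : p.Prime) (hp8 : p % 8 = 1) (hα : 1 ≤ α)
    (q : ℕ) (hq : q = p ^ α) [NeZero q]
    (χ₄ : DirichletCharacter ℂ q) (hord : orderOf χ₄ = 4) :
    let ξ : ℂ := jacobiSum χ₄ (χ₄ ^ 2)
    let S : ℤ → ℤ → ℤ → ℂ := fun i₁ i₂ i₃ =>
      ∑ x : ZMod q, ∑ y : ZMod q,
        if IsUnit x ∧ IsUnit (1 - x) ∧ IsUnit y ∧ IsUnit (1 - y) ∧ IsUnit (x - y) then
          (χ₄ ^ i₁) y * (χ₄ ^ i₂) (1 - y) * (χ₄ ^ i₃) (x - y)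
        else 0
    S 1 1 1 = -2 * ξ * (p : ℂ) ^ (α - 1) ∧
    S 1 1 (-1) = 2 * (p : ℂ) ^ (2 * α - 2) ∧
    S 1 (-1) 1 = -(p : ℂ) ^ (α - 1) * ((starRingEnd ℂ) ξ - (p : ℂ) ^ (α - 1)) ∧
    S 1 (-1) (-1) = -(p : ℂ) ^ (α - 1) * (ξ - (p : ℂ) ^ (α - 1)) := by
  intro ξ S
  obtain ⟨k, rfl⟩ : ∃ k, α = k + 1 := ⟨α - 1, by omega⟩
  subst hq
  have : Fact p.Prime := ⟨hp⟩
  have h4 := Nat.coprime_four_of_odd (Nat.odd_iff.2 (by omega : p % 2 = 1))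
  have hχ4 : χ₄ ^ 4 = 1 := hord ▸ pow_orderOf_eq_one χ₄
  have hχ1 : χ₄ ≠ 1 := by
    rintro rfl
    simp at hord
  have hsq : (χ₄ ^ 2)⁻¹ = χ₄ ^ 2 := inv_eq_of_mul_eq_one_right (by rw [← pow_add, hχ4])
  have hconj : starRingEnd ℂ (jacobiSum χ₄ (χ₄ ^ 2)) = jacobiSum (χ₄ ^ 2) χ₄⁻¹ := by
    rw [← jacobiSum_ringHomComp]
    change jacobiSum (star χ₄) (star (χ₄ ^ 2)) = _
    rw [MulChar.star_eq_inv, MulChar.star_eq_inv, hsq, jacobiSum_comm]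
  have hχ4' : χ₄⁻¹ ^ 4 = 1 := by rw [inv_pow, hχ4, inv_one]
  have hχ1' : χ₄⁻¹ ≠ 1 := inv_ne_one.2 hχ1
  have hS := MulChar.sum_sum_ite_isUnit_mul_apply_sub h4 hχ4 hχ1
    (MulChar.apply_neg_one_of_pow_four_eq_one hp8 hχ4)
  have hS' := MulChar.sum_sum_ite_isUnit_mul_apply_sub h4 hχ4' hχ1'
    (MulChar.apply_neg_one_of_pow_four_eq_one hp8 hχ4')
  simp only [S, ξ, zpow_one, zpow_neg_one, Nat.add_sub_cancel, hS, hS', mul_inv_cancel,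
    inv_mul_cancel, ← sq, inv_pow, hsq, jacobiSum_comm χ₄ 1, hconj,
    MulChar.jacobiSum_one_left_of_ne_one h4 hχ4 hχ1,
    MulChar.jacobiSum_one_left_of_ne_one h4 hχ4' hχ1', show 2 * (k + 1) - 2 = 2 * k by omega]
  refine ⟨?_, ?_, ?_, ?_⟩
  · rw [jacobiSum_comm (χ₄ ^ 2) χ₄]
    ring
  all_goals ring
end
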